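/- Let K be an algebraically closed field and A a finite set of indeterminates. Then a proper ideal i of K[x_α : α∈A] has an algebraic zero, i.e., a point a ∈ K^A annihilating all polynomials of i. -/

import Mathlib

theorem stmt6 (K : Type u) [Field K] [IsAlgClosed K] (A : Type v) [Finite A]
    (i : Ideal (MvPolynomial A K)) (hi : i ≠ ⊤) :
    ∃ a : A → K, ∀ p ∈ i, MvPolynomial.eval a p = 0 := by
  obtain ⟨m, hm, him⟩ := i.exists_le_maximal hi
  obtain ⟨a, rfl⟩ := MvPolynomial.eq_vanishingIdeal_singleton_of_isMaximal K hm
  exact ⟨a, fun p hp => (MvPolynomial.mem_vanishingIdeal_singleton_iff a p).mp (him hp)⟩
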